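/- arXiv:1705.00437 — 3 statements merged into one kernel-verified Lean document; each statement's English description precedes it below -/
import Mathlib

section
/- Let c₀, c₁, c₂ > 0 with c₁ ≤ c₂. Let ν, τ₂ : ℝ → ℝ satisfy c₁ ≤ ν(e) ≤ c₂ and 0 ≤ τ₂(e) ≤ c₀ for all e. Suppose S, D ∈ ℝ^{3×3} and e ∈ ℝ satisfy D = (1/(2ν(e))) · ((|S| − τ₂(e))⁺/|S|) · S (with D = 0 if S = 0). Then there exist constants α, β > 0 depending only on c₀, c₁, c₂ (not on S, D, e) such that S · D ≥ α(|S|² + |D|²) − β. -/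
/-- Frobenius inner product on 3×3 real matrices. -/
noncomputable def Mdot (A B : Matrix (Fin 3) (Fin 3) ℝ) : ℝ := ∑ i, ∑ j, A i j * B i j

/-- Frobenius norm. -/
noncomputable def Mnorm (A : Matrix (Fin 3) (Fin 3) ℝ) : ℝ := Real.sqrt (Mdot A A)

/-- Truncation map ((|A| − τ)⁺/|A|)·A, with value 0 at A = 0. -/
noncomputable def trunc (τ : ℝ) (A : Matrix (Fin 3) (Fin 3) ℝ) : Matrix (Fin 3) (Fin 3) ℝ :=
  if A = 0 then 0 else (max (Mnorm A - τ) 0 / Mnorm A) • A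

lemma mdot_self_nonneg (A : Matrix (Fin 3) (Fin 3) ℝ) : 0 ≤ Mdot A A := by
  apply Finset.sum_nonneg; intro i _
  apply Finset.sum_nonneg; intro j _
  exact mul_self_nonneg _

lemma mdot_self_eq_zero {A : Matrix (Fin 3) (Fin 3) ℝ} (h : Mdot A A = 0) : A = 0 := by
  ext i j
  have h1 := (Finset.sum_eq_zero_iff_of_nonneg (fun i _ =>
    Finset.sum_nonneg (fun j _ => mul_self_nonneg (A i j)))).mp h i (Finset.mem_univ i)
  have h2 := (Finset.sum_eq_zero_iff_of_nonneg (fun j _ =>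
    mul_self_nonneg (A i j))).mp h1 j (Finset.mem_univ j)
  simpa [mul_self_eq_zero] using h2

lemma mnorm_pos {A : Matrix (Fin 3) (Fin 3) ℝ} (hA : A ≠ 0) : 0 < Mnorm A := by
  apply Real.sqrt_pos.mpr
  rcases lt_or_eq_of_le (mdot_self_nonneg A) with h | h
  · exact h
  · exact absurd (mdot_self_eq_zero h.symm) hA

lemma mnorm_sq (A : Matrix (Fin 3) (Fin 3) ℝ) : Mnorm A ^ 2 = Mdot A A :=
  Real.sq_sqrt (mdot_self_nonneg A)

lemma mdot_smul_right (c : ℝ) (A B : Matrix (Fin 3) (Fin 3) ℝ) :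
    Mdot A (c • B) = c * Mdot A B := by
  simp only [Mdot, Finset.mul_sum, Matrix.smul_apply, smul_eq_mul]
  exact Finset.sum_congr rfl fun i _ => Finset.sum_congr rfl fun j _ => by ring

lemma mnorm_smul {c : ℝ} (hc : 0 ≤ c) (A : Matrix (Fin 3) (Fin 3) ℝ) :
    Mnorm (c • A) = c * Mnorm A := by
  have : Mdot (c • A) (c • A) = c ^ 2 * Mdot A A := by
    simp only [Mdot, Finset.mul_sum, Matrix.smul_apply, smul_eq_mul]
    exact Finset.sum_congr rfl fun i _ => Finset.sum_congr rfl fun j _ => by ring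
  rw [Mnorm, this, Real.sqrt_mul (sq_nonneg c), Real.sqrt_sq hc, Mnorm]

theorem stmt2 (c₀ c₁ c₂ : ℝ) (hc₀ : 0 < c₀) (hc₁ : 0 < c₁) (hc₂ : 0 < c₂) (h12 : c₁ ≤ c₂)
    (ν τ₂ : ℝ → ℝ)
    (hν : ∀ e, c₁ ≤ ν e ∧ ν e ≤ c₂) (hτ : ∀ e, 0 ≤ τ₂ e ∧ τ₂ e ≤ c₀) :
    ∃ α > (0:ℝ), ∃ β > (0:ℝ), ∀ (S D : Matrix (Fin 3) (Fin 3) ℝ) (e : ℝ),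
      D = (1 / (2 * ν e)) • trunc (τ₂ e) S →
      Mdot S D ≥ α * (Mnorm S ^ 2 + Mnorm D ^ 2) - β := by
  refine ⟨min (1 / (8 * c₂)) c₁, ?_, c₀ ^ 2 / (8 * c₂), ?_, ?_⟩
  · exact lt_min (by positivity) hc₁
  · positivity
  intro S D e hD
  obtain ⟨hν1, hν2⟩ := hν e
  obtain ⟨hτ1, hτ2⟩ := hτ e
  have hνpos : 0 < ν e := lt_of_lt_of_le hc₁ hν1
  by_cases hS : S = 0
  · subst hS
    have hD0 : D = 0 := by simp [hD, trunc]
    subst hD0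
    have h0 : Mnorm 0 = 0 := by simp [Mnorm, Mdot]
    have h0' : Mdot (0 : Matrix (Fin 3) (Fin 3) ℝ) 0 = 0 := by simp [Mdot]
    rw [h0, h0']
    have : 0 ≤ c₀ ^ 2 / (8 * c₂) := by positivity
    nlinarith
  · set m := Mnorm S with hm_def
    have hm : 0 < m := mnorm_pos hS
    set t := max (m - τ₂ e) 0 with ht_def
    have ht0 : 0 ≤ t := le_max_right _ _
    have ht1 : m - c₀ ≤ t := le_trans (by linarith) (le_max_left _ _)
    have ht2 : t ≤ m := max_le (by linarith) hm.le
    set c : ℝ := 1 / (2 * ν e) * (t / m) with hc_def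
    have hc : 0 ≤ c := by positivity
    have hDc : D = c • S := by
      rw [hD, trunc, if_neg hS, smul_smul]
    have hceq : c * (2 * ν e * m) = t := by
      rw [hc_def]; field_simp
    have hSD : Mdot S D = c * m ^ 2 := by
      rw [hDc, mdot_smul_right, ← mnorm_sq]
    have hND : Mnorm D = c * m := by
      rw [hDc, mnorm_smul hc]
    rw [hSD, hND]
    set u := c * m with hu_def
    have hu : 0 ≤ u := mul_nonneg hc hm.le
    -- key inequality A : c * m^2 ≥ (m^2 - c₀^2) / (4 c₂)
    have h1 : t * m ≥ m ^ 2 / 2 - c₀ ^ 2 / 2 := by nlinarith [sq_nonneg (m - c₀)]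
    have hA : c * m ^ 2 ≥ m ^ 2 / (4 * c₂) - c₀ ^ 2 / (4 * c₂) := by
      have h2 : c * m ^ 2 * (2 * c₂) ≥ t * m := by nlinarith [mul_nonneg hc (sq_nonneg m)]
      rw [ge_iff_le, div_sub_div_same, div_le_iff₀ (by positivity)]
      nlinarith
    -- key inequality B : c * m^2 ≥ 2 c₁ u^2
    have h3 : 2 * c₁ * u ≤ m := by nlinarith
    have hB : c * m ^ 2 ≥ 2 * c₁ * u ^ 2 := by nlinarith
    have hα1 : min (1 / (8 * c₂)) c₁ ≤ 1 / (8 * c₂) := min_le_left _ _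
    have hα2 : min (1 / (8 * c₂)) c₁ ≤ c₁ := min_le_right _ _
    have hβ : c₀ ^ 2 / (8 * c₂) = (c₀ ^ 2 / (4 * c₂)) / 2 := by ring
    have hm2 : (1 / (8 * c₂)) * m ^ 2 = (m ^ 2 / (4 * c₂)) / 2 := by ring
    have e1 := mul_le_mul_of_nonneg_right hα1 (sq_nonneg m)
    have e2 := mul_le_mul_of_nonneg_right hα2 (sq_nonneg u)
    have hexp : min (1 / (8 * c₂)) c₁ * (m ^ 2 + u ^ 2)
        = min (1 / (8 * c₂)) c₁ * m ^ 2 + min (1 / (8 * c₂)) c₁ * u ^ 2 := by ring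
    linarith
end

section
/- Let c₀, c₁, c₂ > 0 with c₁ ≤ c₂. Let ν, τ₁ : ℝ → ℝ satisfy c₁ ≤ ν(e) ≤ c₂ and 0 ≤ τ₁(e) ≤ c₀ for all e. Suppose S, D ∈ ℝ^{3×3} and e ∈ ℝ satisfy S = 2ν(e) · ((|D| − τ₁(e))⁺/|D|) · D (with S = 0 if D = 0). Then there exist α, β > 0 depending only on c₀, c₁, c₂ such that S · D ≥ α(|S|² + |D|²) − β. -/
/-!
Write `d = |D|` and `m = (d - τ₁(e))⁺`. Then `|S| = 2ν(e) m` and `S · D = 2ν(e) m d`. Since `m ≤ d`,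
`|S|² ≤ 2c₂ (S · D)`; since `m ≥ d - c₀`, `S · D ≥ 2c₁ (d - c₀) d ≥ c₁ d² - c₁ c₀²`. Averaging the
two bounds gives the claim with `α = min (1/(4c₂)) (c₁/2)` and `β = c₁ c₀² / 2`.
-/

section Frobenius

variable (A B : Matrix (Fin 3) (Fin 3) ℝ)

lemma Mdot_smul_left (c : ℝ) : Mdot (c • A) B = c * Mdot A B := by
  simp only [Mdot, Matrix.smul_apply, smul_eq_mul, Finset.mul_sum, mul_assoc]

lemma Mdot_smul_right (c : ℝ) : Mdot A (c • B) = c * Mdot A B := by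
  simp only [Mdot, Matrix.smul_apply, smul_eq_mul, Finset.mul_sum, mul_left_comm]

lemma Mdot_self_nonneg : 0 ≤ Mdot A A :=
  Finset.sum_nonneg fun _ _ => Finset.sum_nonneg fun _ _ => mul_self_nonneg _

lemma Mdot_self_eq_zero : Mdot A A = 0 ↔ A = 0 := by
  have hrow (i : Fin 3) : 0 ≤ ∑ j, A i j * A i j := Finset.sum_nonneg fun _ _ => mul_self_nonneg _
  rw [Mdot, Finset.sum_eq_zero_iff_of_nonneg fun i _ => hrow i, ← Matrix.ext_iff]
  simp only [Finset.sum_eq_zero_iff_of_nonneg fun _ _ => mul_self_nonneg _, Finset.mem_univ,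
    forall_const, mul_self_eq_zero, Matrix.zero_apply]

lemma Mnorm_nonneg : 0 ≤ Mnorm A := Real.sqrt_nonneg _

lemma Mnorm_sq : Mnorm A ^ 2 = Mdot A A := Real.sq_sqrt (Mdot_self_nonneg A)

variable {A} in
lemma Mnorm_pos (hA : A ≠ 0) : 0 < Mnorm A :=
  Real.sqrt_pos.mpr <| (Mdot_self_nonneg A).lt_of_ne' <| (Mdot_self_eq_zero A).not.mpr hA

lemma Mnorm_smul (c : ℝ) : Mnorm (c • A) = |c| * Mnorm A := by
  rw [Mnorm, Mdot_smul_left, Mdot_smul_right, ← mul_assoc, ← sq, Real.sqrt_mul (sq_nonneg c),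
    Real.sqrt_sq_eq_abs, Mnorm]

lemma Mdot_trunc_self (τ : ℝ) : Mdot (trunc τ A) A = max (Mnorm A - τ) 0 * Mnorm A := by
  by_cases hA : A = 0
  · simp [trunc, hA, Mnorm, Mdot]
  · rw [trunc, if_neg hA, Mdot_smul_left, ← Mnorm_sq]
    field_simp [(Mnorm_pos hA).ne']

lemma Mnorm_trunc {τ : ℝ} (hτ : 0 ≤ τ) : Mnorm (trunc τ A) = max (Mnorm A - τ) 0 := by
  by_cases hA : A = 0
  · simp [trunc, hA, Mnorm, Mdot, hτ]
  · rw [trunc, if_neg hA, Mnorm_smul,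
      abs_of_nonneg (div_nonneg (le_max_right _ _) (Mnorm_nonneg A))]
    field_simp [(Mnorm_pos hA).ne']

end Frobenius

section Scalar

variable {c₀ c₁ c₂ ν τ d : ℝ}

lemma mul_max_sub_sq_le (hν : 0 ≤ ν) (hνc₂ : ν ≤ c₂) (hτ : 0 ≤ τ) (hd : 0 ≤ d) :
    (2 * ν * max (d - τ) 0) ^ 2 ≤ 2 * c₂ * (2 * ν * (max (d - τ) 0 * d)) := by
  have hm : max (d - τ) 0 ≤ d := max_le (by linarith) hd
  have hm₀ : 0 ≤ max (d - τ) 0 := le_max_right _ _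
  have : ν * max (d - τ) 0 ≤ c₂ * d := mul_le_mul hνc₂ hm hm₀ (hν.trans hνc₂)
  nlinarith [mul_le_mul_of_nonneg_left this (mul_nonneg hν hm₀)]

lemma sub_le_mul_max_sub_mul (hc₁ : 0 ≤ c₁) (hc₁ν : c₁ ≤ ν) (hτc₀ : τ ≤ c₀) (hd : 0 ≤ d) :
    c₁ * d ^ 2 - c₁ * c₀ ^ 2 ≤ 2 * ν * (max (d - τ) 0 * d) := by
  have hm : d - c₀ ≤ max (d - τ) 0 := (by linarith : d - c₀ ≤ d - τ).trans (le_max_left _ _)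
  have hmd : (d - c₀) * d ≤ max (d - τ) 0 * d := mul_le_mul_of_nonneg_right hm hd
  have hmd₀ : 0 ≤ max (d - τ) 0 * d := mul_nonneg (le_max_right _ _) hd
  nlinarith [mul_le_mul_of_nonneg_right hc₁ν hmd₀, mul_nonneg hc₁ (sq_nonneg (d - c₀))]

end Scalar

lemma min_mul_add_sub_le {a c b x y p : ℝ} (ha : 0 < a) (hx : 0 ≤ x) (hy : 0 ≤ y)
    (hxp : x ≤ a * p) (hyp : c * y - b ≤ p) :
    min (1 / (2 * a)) (c / 2) * (x + y) - b / 2 ≤ p := by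
  have hx' : min (1 / (2 * a)) (c / 2) * x ≤ p / 2 :=
    calc min (1 / (2 * a)) (c / 2) * x ≤ 1 / (2 * a) * x :=
          mul_le_mul_of_nonneg_right (min_le_left _ _) hx
      _ ≤ p / 2 := by rw [div_mul_eq_mul_div, one_mul, div_le_iff₀ (by positivity)]; linarith
  have hy' : min (1 / (2 * a)) (c / 2) * y ≤ c / 2 * y :=
    mul_le_mul_of_nonneg_right (min_le_right _ _) hy
  linarith

theorem stmt3_general (c₀ c₁ c₂ : ℝ) (hc₀ : 0 < c₀) (hc₁ : 0 < c₁) (hc₂ : 0 < c₂)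
    (ν τ₁ : ℝ → ℝ)
    (hν : ∀ e, c₁ ≤ ν e ∧ ν e ≤ c₂) (hτ : ∀ e, 0 ≤ τ₁ e ∧ τ₁ e ≤ c₀) :
    ∃ α > (0:ℝ), ∃ β > (0:ℝ), ∀ (S D : Matrix (Fin 3) (Fin 3) ℝ) (e : ℝ),
      S = (2 * ν e) • trunc (τ₁ e) D →
      Mdot S D ≥ α * (Mnorm S ^ 2 + Mnorm D ^ 2) - β := by
  refine ⟨min (1 / (2 * (2 * c₂))) (c₁ / 2), lt_min (by positivity) (by positivity),
    c₁ * c₀ ^ 2 / 2, by positivity, fun S D e hS => ?_⟩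
  obtain ⟨hc₁ν, hνc₂⟩ := hν e
  obtain ⟨hτ₀, hτc₀⟩ := hτ e
  have hν₀ : 0 ≤ 2 * ν e := by linarith
  have hSD : Mdot S D = 2 * ν e * (max (Mnorm D - τ₁ e) 0 * Mnorm D) := by
    rw [hS, Mdot_smul_left, Mdot_trunc_self]
  have hSnorm : Mnorm S = 2 * ν e * max (Mnorm D - τ₁ e) 0 := by
    rw [hS, Mnorm_smul, abs_of_nonneg hν₀, Mnorm_trunc D hτ₀]
  rw [hSD, hSnorm, ge_iff_le]
  exact min_mul_add_sub_le (by positivity) (sq_nonneg _) (sq_nonneg _)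
    (mul_max_sub_sq_le (by linarith) hνc₂ hτ₀ (Mnorm_nonneg D))
    (sub_le_mul_max_sub_mul hc₁.le hc₁ν hτc₀ (Mnorm_nonneg D))

theorem stmt3 (c₀ c₁ c₂ : ℝ) (hc₀ : 0 < c₀) (hc₁ : 0 < c₁) (hc₂ : 0 < c₂) (h12 : c₁ ≤ c₂)
    (ν τ₁ : ℝ → ℝ)
    (hν : ∀ e, c₁ ≤ ν e ∧ ν e ≤ c₂) (hτ : ∀ e, 0 ≤ τ₁ e ∧ τ₁ e ≤ c₀) :
    ∃ α > (0:ℝ), ∃ β > (0:ℝ), ∀ (S D : Matrix (Fin 3) (Fin 3) ℝ) (e : ℝ),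
      S = (2 * ν e) • trunc (τ₁ e) D →
      Mdot S D ≥ α * (Mnorm S ^ 2 + Mnorm D ^ 2) - β :=
  stmt3_general c₀ c₁ c₂ hc₀ hc₁ hc₂ ν τ₁ hν hτ
end

section
/- Let k ∈ ℕ, k ≥ 1, and let ν, τ₁, τ₂ : ℝ → ℝ be continuous with c₁ ≤ ν ≤ c₂, 0 ≤ τ₁, τ₂ ≤ c₀ and τ₁(e)τ₂(e) = 0 for all e. Define Sᵏ(D, e) = min{k + 2ν(e), (2ν(e)(|D| − τ₁(e))⁺ + τ₂(e))/|D|} · D for D ≠ 0 and Sᵏ(0, e) = 0. Then for each fixed e, the map D ↦ Sᵏ(D, e) is monotone: (Sᵏ(D, e) − Sᵏ(D', e)) · (D − D') ≥ 0 for all D, D' ∈ ℝ^{3×3}. -/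
/-- The approximate stress Sᵏ(D, e) = min{k + 2ν(e), (2ν(e)(|D| − τ₁(e))⁺ + τ₂(e))/|D|}·D,
with Sᵏ(0, e) = 0. -/
noncomputable def Sk (k : ℕ) (ν τ₁ τ₂ : ℝ → ℝ) (D : Matrix (Fin 3) (Fin 3) ℝ) (e : ℝ) :
    Matrix (Fin 3) (Fin 3) ℝ :=
  if D = 0 then 0
  else min ((k : ℝ) + 2 * ν e) ((2 * ν e * max (Mnorm D - τ₁ e) 0 + τ₂ e) / Mnorm D) • D

/-!
Writing `Sᵏ(D, e) = c(|D|) D`, the map is radial with profile `r ↦ c(r) r = min{(k + 2ν)r,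
2ν(r − τ₁)⁺ + τ₂}`, a minimum of two nondecreasing functions of `r`. For any radial map
`x ↦ c(‖x‖) x` with `c ≥ 0` and nondecreasing profile, Cauchy–Schwarz gives
`⟪c(‖x‖) x − c(‖y‖) y, x − y⟫ ≥ (c(‖x‖)‖x‖ − c(‖y‖)‖y‖)(‖x‖ − ‖y‖) ≥ 0`, and the Frobenius
inner product is the Euclidean one on `ℝ^(3×3)`.
-/

open Set RealInnerProductSpace

section Radial

variable {E : Type*} [NormedAddCommGroup E] [InnerProductSpace ℝ E]

theorem real_inner_smul_sub_smul_nonneg {x y : E} {a b : ℝ} (ha : 0 ≤ a) (hb : 0 ≤ b)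
    (h : 0 ≤ (a * ‖x‖ - b * ‖y‖) * (‖x‖ - ‖y‖)) :
    0 ≤ ⟪a • x - b • y, x - y⟫ := by
  have expand : ⟪a • x - b • y, x - y⟫ = a * ‖x‖ ^ 2 - (a + b) * ⟪x, y⟫ + b * ‖y‖ ^ 2 := by
    simp only [inner_sub_left, inner_sub_right, real_inner_smul_left, real_inner_self_eq_norm_sq,
      real_inner_comm x y]
    ring
  rw [expand]
  nlinarith [mul_le_mul_of_nonneg_left (real_inner_le_norm x y) (add_nonneg ha hb)]

theorem real_inner_smul_norm_sub_nonneg {c : ℝ → ℝ} (hc : ∀ r, 0 ≤ r → 0 ≤ c r)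
    (hmono : MonotoneOn (fun r => c r * r) (Ici 0)) (x y : E) :
    0 ≤ ⟪c ‖x‖ • x - c ‖y‖ • y, x - y⟫ := by
  refine real_inner_smul_sub_smul_nonneg (hc _ (norm_nonneg x)) (hc _ (norm_nonneg y)) ?_
  rcases le_total ‖x‖ ‖y‖ with hle | hle
  · exact mul_nonneg_of_nonpos_of_nonpos
      (sub_nonpos.2 (hmono (norm_nonneg x) (norm_nonneg y) hle)) (sub_nonpos.2 hle)
  · exact mul_nonneg (sub_nonneg.2 (hmono (norm_nonneg y) (norm_nonneg x) hle))
      (sub_nonneg.2 hle)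

end Radial

section Frobenius

def Matrix.toEuclidean (A : Matrix (Fin 3) (Fin 3) ℝ) : EuclideanSpace ℝ (Fin 3 × Fin 3) :=
  WithLp.toLp 2 fun p => A p.1 p.2

@[simp]
theorem Matrix.toEuclidean_sub (A B : Matrix (Fin 3) (Fin 3) ℝ) :
    (A - B).toEuclidean = A.toEuclidean - B.toEuclidean := rfl

@[simp]
theorem Matrix.toEuclidean_smul (a : ℝ) (A : Matrix (Fin 3) (Fin 3) ℝ) :
    (a • A).toEuclidean = a • A.toEuclidean := rfl

theorem Mdot_eq_inner (A B : Matrix (Fin 3) (Fin 3) ℝ) :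
    Mdot A B = ⟪A.toEuclidean, B.toEuclidean⟫ := by
  simp [Mdot, Matrix.toEuclidean, PiLp.inner_apply, Fintype.sum_prod_type, mul_comm]

theorem Mnorm_eq_norm (A : Matrix (Fin 3) (Fin 3) ℝ) : Mnorm A = ‖A.toEuclidean‖ := by
  rw [Mnorm, Mdot_eq_inner, real_inner_self_eq_norm_sq, Real.sqrt_sq (norm_nonneg _)]

end Frobenius

section Coefficient

noncomputable def stressCoeff (p a t₁ t₂ r : ℝ) : ℝ := min p ((a * max (r - t₁) 0 + t₂) / r)

variable {p a t₁ t₂ : ℝ}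

theorem stressCoeff_nonneg (hp : 0 ≤ p) (ha : 0 ≤ a) (ht₂ : 0 ≤ t₂) {r : ℝ} (hr : 0 ≤ r) :
    0 ≤ stressCoeff p a t₁ t₂ r :=
  le_min hp (by positivity)

theorem stressCoeff_mul_self (ha : 0 ≤ a) (ht₂ : 0 ≤ t₂) {r : ℝ} (hr : 0 ≤ r) :
    stressCoeff p a t₁ t₂ r * r = min (p * r) (a * max (r - t₁) 0 + t₂) := by
  rcases hr.eq_or_lt with rfl | hr
  · simp only [mul_zero, zero_sub]
    exact (min_eq_left (by positivity)).symm
  · rw [stressCoeff, min_mul_of_nonneg _ _ hr.le, div_mul_cancel₀ _ hr.ne']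

theorem monotoneOn_stressCoeff_mul_self (hp : 0 ≤ p) (ha : 0 ≤ a) (ht₂ : 0 ≤ t₂) :
    MonotoneOn (fun r => stressCoeff p a t₁ t₂ r * r) (Ici 0) := by
  intro r hr s hs hrs
  simp only [stressCoeff_mul_self ha ht₂ hr, stressCoeff_mul_self ha ht₂ hs]
  gcongr

end Coefficient

theorem Sk_eq_stressCoeff_smul (k : ℕ) (ν τ₁ τ₂ : ℝ → ℝ) (D : Matrix (Fin 3) (Fin 3) ℝ) (e : ℝ) :
    Sk k ν τ₁ τ₂ D e = stressCoeff (k + 2 * ν e) (2 * ν e) (τ₁ e) (τ₂ e) (Mnorm D) • D := by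
  unfold Sk stressCoeff
  split_ifs with hD <;> simp [hD]

theorem stmt7_general (k : ℕ) (c₀ c₁ c₂ : ℝ) (hc₁ : 0 < c₁)
    (ν τ₁ τ₂ : ℝ → ℝ)
    (hν : ∀ e, c₁ ≤ ν e ∧ ν e ≤ c₂)
    (hτ₂ : ∀ e, 0 ≤ τ₂ e ∧ τ₂ e ≤ c₀) :
    ∀ (e : ℝ) (D D' : Matrix (Fin 3) (Fin 3) ℝ),
      0 ≤ Mdot (Sk k ν τ₁ τ₂ D e - Sk k ν τ₁ τ₂ D' e) (D - D') := by
  intro e D D'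
  have ha : 0 ≤ 2 * ν e := by linarith [(hν e).1]
  have hp : 0 ≤ (k : ℝ) + 2 * ν e := by positivity
  have ht₂ : 0 ≤ τ₂ e := (hτ₂ e).1
  simp only [Sk_eq_stressCoeff_smul, Mdot_eq_inner, Mnorm_eq_norm, Matrix.toEuclidean_sub,
    Matrix.toEuclidean_smul]
  exact real_inner_smul_norm_sub_nonneg (fun r => stressCoeff_nonneg hp ha ht₂)
    (monotoneOn_stressCoeff_mul_self hp ha ht₂) _ _

theorem stmt7 (k : ℕ) (hk : 1 ≤ k) (c₀ c₁ c₂ : ℝ) (hc₀ : 0 < c₀) (hc₁ : 0 < c₁) (hc₂ : 0 < c₂)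
    (ν τ₁ τ₂ : ℝ → ℝ) (hνc : Continuous ν) (hτ₁c : Continuous τ₁) (hτ₂c : Continuous τ₂)
    (hν : ∀ e, c₁ ≤ ν e ∧ ν e ≤ c₂)
    (hτ₁ : ∀ e, 0 ≤ τ₁ e ∧ τ₁ e ≤ c₀) (hτ₂ : ∀ e, 0 ≤ τ₂ e ∧ τ₂ e ≤ c₀)
    (hcomp : ∀ e, τ₁ e * τ₂ e = 0) :
    ∀ (e : ℝ) (D D' : Matrix (Fin 3) (Fin 3) ℝ),
      0 ≤ Mdot (Sk k ν τ₁ τ₂ D e - Sk k ν τ₁ τ₂ D' e) (D - D') :=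
  stmt7_general k c₀ c₁ c₂ hc₁ ν τ₁ τ₂ hν hτ₂
end
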